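/- Let F be a finite field of order q = p^k, and h ∈ F[x] nonzero. Define F_{p,q}(x,y) = G_{p,q}(x)·R_{p,q}(x,y)·(y^q − y) where G_{p,q}(x) = (x^{q²}−x)(x^{q³}−x)⋯(x^{q^p}−x) and R_{p,q}(x,y) = ∏_{j=p-1}^{1} (1 − (y (ad x)^j)^{q−1}) (with y ad x = [y,x]). Then F_{p,q}(x, x) = (x^q − x)(x^{q²}−x)⋯(x^{q^p}−x) is nonzero in A_h = F⟨x,y⟩/⟨yx−xy−h⟩. Consequently, since F_{p,q} is an identity of M_p(F) (Genov), A_h and M_p(F) are not PI-equivalent over a finite field. -/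

import Mathlib

noncomputable section

variable (F : Type*) [Field F]

/-- The relation yx = xy + h in F⟨x,y⟩. -/
def AhRel (h : Polynomial F) : FreeAlgebra F (Fin 2) → FreeAlgebra F (Fin 2) → Prop :=
  fun a b => a = FreeAlgebra.ι F 1 * FreeAlgebra.ι F 0 ∧
    b = FreeAlgebra.ι F 0 * FreeAlgebra.ι F 1 + Polynomial.aeval (FreeAlgebra.ι F 0) h

/-- A_h = F⟨x,y⟩/⟨yx − xy − h⟩. -/
abbrev Ah (h : Polynomial F) := RingQuot (AhRel F h)

/-- The j-fold iterated commutator a (ad b)^j = [..[a,b],..,b]. -/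
def adPow {A : Type*} [Ring A] (a b : A) : ℕ → A
  | 0 => a
  | j + 1 => adPow a b j * b - b * adPow a b j

/- ### Auxiliary material -/

lemma adPow_self_succ {A : Type*} [Ring A] (a : A) : ∀ j, adPow a a (j + 1) = 0
  | 0 => by simp [adPow]
  | j + 1 => by rw [adPow, adPow_self_succ a j]; simp

/-- The operator f ↦ h·f′ on F[x]. -/
def myD (h : Polynomial F) : Module.End F (Polynomial F) :=
  (Algebra.lmul F (Polynomial F) h) ∘ₗ (Polynomial.derivative : Polynomial F →ₗ[F] Polynomial F)

/-- The representation of F⟨x,y⟩ on F[x] sending x to multiplication by x and y to f ↦ h·f′. -/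
def myRho0 (h : Polynomial F) : FreeAlgebra F (Fin 2) →ₐ[F] Module.End F (Polynomial F) :=
  FreeAlgebra.lift F (fun i => if i = 0 then Algebra.lmul F (Polynomial F) Polynomial.X else myD F h)

lemma myRho0_rel (h : Polynomial F) : ∀ ⦃a b⦄, AhRel F h a b → myRho0 F h a = myRho0 F h b := by
  rintro a b ⟨rfl, rfl⟩
  have h0 : myRho0 F h (FreeAlgebra.ι F 0) = Algebra.lmul F (Polynomial F) Polynomial.X := by
    simp [myRho0]
  have h1 : myRho0 F h (FreeAlgebra.ι F 1) = myD F h := by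
    simp [myRho0]
  rw [map_mul, map_add, map_mul, h0, h1, ← Polynomial.aeval_algHom_apply (myRho0 F h), h0,
    Polynomial.aeval_algHom_apply (Algebra.lmul F (Polynomial F)), Polynomial.aeval_X_left_apply]
  refine LinearMap.ext fun f => ?_
  simp only [LinearMap.add_apply, Module.End.mul_apply, myD, LinearMap.coe_comp,
    Function.comp_apply, Algebra.coe_lmul_eq_mul, LinearMap.mul_apply',
    Polynomial.derivative_mul, Polynomial.derivative_X, one_mul]
  ring

/-- The induced representation of A_h on F[x]. -/
def myRho (h : Polynomial F) : Ah F h →ₐ[F] Module.End F (Polynomial F) :=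
  RingQuot.liftAlgHom F ⟨myRho0 F h, myRho0_rel F h⟩

lemma myRho_X (h : Polynomial F) :
    myRho F h (RingQuot.mkRingHom (AhRel F h) (FreeAlgebra.ι F 0)) =
      Algebra.lmul F (Polynomial F) Polynomial.X := by
  have : (RingQuot.mkRingHom (AhRel F h) (FreeAlgebra.ι F 0)) =
      RingQuot.mkAlgHom F (AhRel F h) (FreeAlgebra.ι F 0) := by
    rw [← RingQuot.mkAlgHom_coe F]; rfl
  rw [this, myRho, RingQuot.liftAlgHom_mkAlgHom_apply]
  simp [myRho0]

/-- Polynomials in x are faithfully represented in A_h. -/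
lemma aeval_inj (h : Polynomial F) (P : Polynomial F)
    (hP : Polynomial.aeval (RingQuot.mkRingHom (AhRel F h) (FreeAlgebra.ι F 0)) P = 0) :
    P = 0 := by
  have := congrArg (myRho F h) hP
  rw [← Polynomial.aeval_algHom_apply (myRho F h), myRho_X,
    Polynomial.aeval_algHom_apply (Algebra.lmul F (Polynomial F)),
    Polynomial.aeval_X_left_apply, map_zero] at this
  have := congrArg (fun g : Module.End F (Polynomial F) => g 1) this
  simpa using this

lemma pow_step {M : Type*} [Monoid M] (a : M) {i j : ℕ} (hij : i < j)
    (heq : a ^ (i + 1) = a ^ (j + 1)) :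
    ∀ s k, i + 1 ≤ s → a ^ (s + k * (j - i)) = a ^ s := by
  have step : ∀ t : ℕ, a ^ (i + 1 + t) = a ^ (i + 1 + t + (j - i)) := by
    intro t
    have e : i + 1 + t + (j - i) = j + 1 + t := by omega
    rw [e, pow_add a (i+1) t, pow_add a (j+1) t, heq]
  have main : ∀ k t, a ^ (i + 1 + t + k * (j - i)) = a ^ (i + 1 + t) := by
    intro k
    induction k with
    | zero => simp
    | succ k ih =>
      intro t
      have e1 : i + 1 + t + (k + 1) * (j - i) = i + 1 + (t + k * (j - i)) + (j - i) := by ring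
      have e2 : i + 1 + (t + k * (j - i)) = i + 1 + t + k * (j - i) := by ring
      rw [e1, ← step (t + k * (j - i)), e2, ih]
  intro s k hs
  obtain ⟨t, rfl⟩ : ∃ t, s = i + 1 + t := ⟨s - (i + 1), by omega⟩
  exact main k t

/-- In a finite monoid there is a uniform pair of distinct exponents with aⁿ = aᵐ. -/
lemma finite_monoid_pow (M : Type*) [Monoid M] [Fintype M] :
    ∃ n m : ℕ, m < n ∧ ∀ a : M, a ^ n = a ^ m := by
  classical
  set c := Fintype.card M with hc
  refine ⟨c + 1 + c.factorial, c + 1, by have := c.factorial_pos; omega, fun a => ?_⟩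
  obtain ⟨i, j, hne, heq⟩ := Fintype.exists_ne_map_eq_of_card_lt
    (fun i : Fin (c + 1) => a ^ ((i : ℕ) + 1)) (by simp [hc])
  rcases Nat.lt_or_gt_of_ne (Fin.val_ne_iff.mpr hne) with hij | hij
  · have hdvd : ((j : ℕ) - i) ∣ c.factorial := Nat.dvd_factorial (by omega) (by omega)
    obtain ⟨e, he⟩ := hdvd
    have := pow_step a hij heq (c + 1) e (by omega)
    rwa [show e * ((j:ℕ) - i) = c.factorial by rw [he, Nat.mul_comm]] at this
  · have hdvd : ((i : ℕ) - j) ∣ c.factorial := Nat.dvd_factorial (by omega) (by omega)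
    obtain ⟨e, he⟩ := hdvd
    have := pow_step a hij heq.symm (c + 1) e (by omega)
    rwa [show e * ((i:ℕ) - j) = c.factorial by rw [he, Nat.mul_comm]] at this

/- ### The main theorem -/

/-- Over a finite field F of order q = p^k and for nonzero h ∈ F[x], the
evaluation at (x,x) of Genov's identity F_{p,q}(x,y) = G_{p,q}(x)·R_{p,q}(x,y)·(y^q−y)
for M_p(F), where G_{p,q}(x) = (x^{q²}−x)⋯(x^{q^p}−x) and
R_{p,q}(x,y) = ∏_{j=p-1}^{1}(1 − (y(ad x)^j)^{q−1}), equals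
(x^q−x)(x^{q²}−x)⋯(x^{q^p}−x), which is nonzero in A_h.  Consequently A_h and
M_p(F) are not PI-equivalent. -/
theorem stmt16 [Fintype F] (p k q : ℕ) (hp : p.Prime) [CharP F p]
    (hk : 0 < k) (hq : q = p ^ k) (hcard : Fintype.card F = q)
    (h : Polynomial F) (hne : h ≠ 0)
    (X : Ah F h) (hX : X = RingQuot.mkRingHom (AhRel F h) (FreeAlgebra.ι F 0)) :
    (((List.range (p - 1)).map fun t => X ^ q ^ (t + 2) - X).prod *
        ((List.range (p - 1)).reverse.map fun t =>
          (1 : Ah F h) - (adPow X X (t + 1)) ^ (q - 1)).prod *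
        (X ^ q - X) =
      ((List.range p).map fun t => X ^ q ^ (t + 1) - X).prod) ∧
    (((List.range p).map fun t => X ^ q ^ (t + 1) - X).prod ≠ 0) ∧
    ¬ (∀ (m : ℕ) (f : FreeAlgebra F (Fin m)),
        (∀ a : Fin m → Ah F h, FreeAlgebra.lift F a f = 0) ↔
          (∀ a : Fin m → Matrix (Fin p) (Fin p) F, FreeAlgebra.lift F a f = 0)) := by
  classical
  have hq2 : 2 ≤ q := by
    rw [hq]; exact Nat.one_lt_pow hk.ne' hp.one_lt
  set ψ : Polynomial F →ₐ[F] Ah F h := Polynomial.aeval X with hψ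
  have hψinj : ∀ P : Polynomial F, ψ P = 0 → P = 0 := by
    intro P hP
    exact aeval_inj F h P (by rwa [← hX])
  have hfac : ∀ n : ℕ, X ^ n - X = ψ (Polynomial.X ^ n - Polynomial.X) := by
    intro n; simp [hψ]
  -- the middle product is 1
  have hmid : ((List.range (p - 1)).reverse.map fun t =>
      (1 : Ah F h) - (adPow X X (t + 1)) ^ (q - 1)).prod = 1 := by
    refine List.prod_eq_one fun x hx => ?_
    simp only [List.mem_map] at hx
    obtain ⟨t, -, rfl⟩ := hx
    rw [adPow_self_succ, zero_pow (by omega), sub_zero]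
  -- the polynomial identity in F[x]
  have hpoly : (((List.range (p - 1)).map fun t =>
        (Polynomial.X : Polynomial F) ^ q ^ (t + 2) - Polynomial.X).prod *
        (Polynomial.X ^ q - Polynomial.X)) =
      ((List.range p).map fun t =>
        (Polynomial.X : Polynomial F) ^ q ^ (t + 1) - Polynomial.X).prod := by
    conv_rhs => rw [show p = (p - 1) + 1 from (Nat.succ_pred_eq_of_pos hp.pos).symm,
      List.range_succ_eq_map]
    rw [List.map_cons, List.prod_cons, List.map_map, mul_comm, pow_one]
    exact congrArg _ (congrArg List.prod (List.map_congr_left fun t _ => rfl))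
  -- rewriting the three products through ψ
  have hlist1 : ((List.range (p - 1)).map fun t => X ^ q ^ (t + 2) - X).prod =
      ψ (((List.range (p - 1)).map fun t =>
        (Polynomial.X : Polynomial F) ^ q ^ (t + 2) - Polynomial.X).prod) := by
    rw [map_list_prod, List.map_map]
    congr 1
    exact List.map_congr_left fun t _ => (hfac _).symm ▸ rfl
  have hlist2 : ((List.range p).map fun t => X ^ q ^ (t + 1) - X).prod =
      ψ (((List.range p).map fun t =>
        (Polynomial.X : Polynomial F) ^ q ^ (t + 1) - Polynomial.X).prod) := by
    rw [map_list_prod, List.map_map]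
    congr 1
    exact List.map_congr_left fun t _ => (hfac _).symm ▸ rfl
  refine ⟨?_, ?_, ?_⟩
  · rw [hmid, mul_one, hlist1, hlist2, hfac q, ← map_mul, hpoly]
  · rw [hlist2]
    intro h0
    have hP2 : (((List.range p).map fun t =>
        (Polynomial.X : Polynomial F) ^ q ^ (t + 1) - Polynomial.X).prod) ≠ 0 := by
      refine List.prod_ne_zero fun hx => ?_
      simp only [List.mem_map] at hx
      obtain ⟨t, -, ht⟩ := hx
      have hXX := sub_eq_zero.mp ht
      have hdeg := congrArg Polynomial.natDegree hXX
      rw [Polynomial.natDegree_X_pow, Polynomial.natDegree_X] at hdeg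
      have : 2 ≤ q ^ (t + 1) := le_trans hq2 (Nat.le_self_pow (by omega) q)
      omega
    exact hP2 (hψinj _ h0)
  · intro hPI
    obtain ⟨n, m, hmn, hnm⟩ := finite_monoid_pow (Matrix (Fin p) (Fin p) F)
    set f : FreeAlgebra F (Fin 1) := FreeAlgebra.ι F 0 ^ n - FreeAlgebra.ι F 0 ^ m with hf
    have hmat : ∀ a : Fin 1 → Matrix (Fin p) (Fin p) F, FreeAlgebra.lift F a f = 0 := by
      intro a
      rw [hf, map_sub, map_pow, map_pow, FreeAlgebra.lift_ι_apply, hnm (a 0), sub_self]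
    have hAh := (hPI 1 f).mpr hmat (fun _ => X)
    rw [hf, map_sub, map_pow, map_pow, FreeAlgebra.lift_ι_apply] at hAh
    have hXnm : ψ (Polynomial.X ^ n - Polynomial.X ^ m) = 0 := by
      rw [map_sub, map_pow, map_pow, Polynomial.aeval_X]
      exact hAh
    have := hψinj _ hXnm
    have := congrArg Polynomial.natDegree (sub_eq_zero.mp this)
    rw [Polynomial.natDegree_X_pow, Polynomial.natDegree_X_pow] at this
    omega
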